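/- arXiv:1911.01393 — 4 statements merged into one kernel-verified Lean document; each statement's English description precedes it below -/
import Mathlib

section
/- Let R be a commutative ring, M an n×n matrix over R with M a b = 0 for fixed indices a ≠ b, and s ∈ R. Let u be the b-th column of M and w the a-th row of M. Then (I - s·u·eₐᵀ) · M · (I + s·e_b·w) = M, where eₐ, e_b are standard basis column vectors. -/
/-- The algebraic content of an exchange point: if M a b = 0, then performing
simultaneously the row operations subtracting s·(M i b) times row a from row i,
and the column operations adding s·(M a j) times column b to column j,
leaves M unchanged. -/
theorem exchange_point_identity {R : Type*} [CommRing R] {n : ℕ}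
    (M : Matrix (Fin n) (Fin n) R) (a b : Fin n) (hab : a ≠ b)
    (h0 : M a b = 0) (s : R) :
    ((1 : Matrix (Fin n) (Fin n) R) -
        s • Matrix.of (fun i j : Fin n => if j = a then M i b else 0)) * M *
      ((1 : Matrix (Fin n) (Fin n) R) +
        s • Matrix.of (fun i j : Fin n => if i = b then M a j else 0)) = M := by
  have hAM : (((1 : Matrix (Fin n) (Fin n) R) -
      s • Matrix.of (fun i j : Fin n => if j = a then M i b else 0)) * M)
      = Matrix.of (fun i l => M i l - s * M i b * M a l) := by
    ext i l
    simp [Matrix.mul_apply, sub_mul, Finset.sum_sub_distrib, Matrix.one_apply,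
      ite_mul, Finset.sum_ite_eq, mul_assoc]
  rw [hAM]
  ext i j
  simp only [Matrix.mul_apply, Matrix.add_apply, Matrix.smul_apply, Matrix.of_apply,
    Matrix.one_apply, mul_add, add_mul, smul_eq_mul, mul_ite, mul_zero, ite_mul, zero_mul,
    sub_mul, Finset.sum_add_distrib, Finset.sum_sub_distrib, Finset.sum_ite_eq',
    Finset.mem_univ, if_true]
  simp [h0]
  ring
end

section
/- Let R be a commutative ring, v ∈ R, and a₁,a₂,a₃,b₁,b₂,b₃,c₁,c₂,c₃ ∈ R with aᵢ·bᵢ = v for i = 1,2,3. Denote by E_{ij}^r the 3×3 elementary matrix I + r·e_{ij}. If E₂₃^{c₁}·E₂₁^{-a₃}·E₁₂^{b₃}·E₃₁^{c₂}·E₃₂^{-a₁}·E₂₃^{b₁}·E₁₂^{c₃}·E₁₃^{-a₂}·E₃₁^{b₂} = I, then cᵢ = -bᵢ for all i, a₁ = b₂b₃, a₂ = b₃b₁, a₃ = b₁b₂, and consequently b₁b₂b₃ = v and a₁a₂a₃ = v². -/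
/-- The 3×3 elementary matrix `I + r·e_{ij}`. -/
def elemMat {R : Type*} [CommRing R] (i j : Fin 3) (r : R) :
    Matrix (Fin 3) (Fin 3) R :=
  1 + r • Matrix.single i j 1

/-!
Cut the loop after its fifth handle slide: the word is trivial iff the product of the first five
elementary matrices equals the inverse of the product of the last four, and the inverse of
`E_{ij}^r` is `E_{ij}^{-r}`. Both sides are then short enough to write down, and the six
off-diagonal entries of the resulting identity read `c₃ = -b₃`, `a₂ = b₃b₁`, `c₁c₂ = a₃`,
`c₁ = -b₁`, `c₂ = -b₂`, `a₁ = -b₂c₃` directly. Then `b₁b₂b₃ = a₁b₁ = v` and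
`a₁a₂a₃ = (b₁b₂b₃)²`.
-/

section

variable {R : Type*} [CommRing R]

theorem elemMat_eq_transvection (i j : Fin 3) (r : R) :
    elemMat i j r = Matrix.transvection i j r := by
  rw [elemMat, Matrix.transvection, Matrix.smul_single, smul_eq_mul, mul_one]

theorem elemMat_mul_elemMat_neg {i j : Fin 3} (h : i ≠ j) (r : R) :
    elemMat i j r * elemMat i j (-r) = 1 := by
  rw [elemMat_eq_transvection, elemMat_eq_transvection,
    Matrix.transvection_mul_transvection_same _ _ h, add_neg_cancel, Matrix.transvection_zero]

theorem elemMat_mul_elemMat_neg_mul {i j : Fin 3} (h : i ≠ j) (r : R)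
    (M : Matrix (Fin 3) (Fin 3) R) :
    elemMat i j r * (elemMat i j (-r) * M) = M := by
  rw [← mul_assoc, elemMat_mul_elemMat_neg h, one_mul]

theorem elemMat_neg_mul_elemMat_mul {i j : Fin 3} (h : i ≠ j) (r : R)
    (M : Matrix (Fin 3) (Fin 3) R) :
    elemMat i j (-r) * (elemMat i j r * M) = M := by
  simpa only [neg_neg] using elemMat_mul_elemMat_neg_mul h (-r) M

theorem monodromy_head_eq (a₁ a₃ b₃ c₁ c₂ : R) :
    elemMat 1 2 c₁ * elemMat 1 0 (-a₃) * elemMat 0 1 b₃ *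
      elemMat 2 0 c₂ * elemMat 2 1 (-a₁) =
    !![1, b₃, 0; c₁ * c₂ - a₃, 1 - a₃ * b₃ - a₁ * c₁, c₁; c₂, -a₁, 1] := by
  ext i j
  fin_cases i <;> fin_cases j <;>
    simp [elemMat, Matrix.mul_apply, Fin.sum_univ_three, Matrix.one_apply] <;> ring

theorem monodromy_tail_inv_eq (a₂ b₁ b₂ c₃ : R) :
    elemMat 2 0 (-b₂) * elemMat 0 2 a₂ * elemMat 0 1 (-c₃) * elemMat 1 2 (-b₁) =
    !![1, -c₃, a₂ + b₁ * c₃; 0, 1, -b₁; -b₂, b₂ * c₃, 1 - a₂ * b₂ - b₁ * b₂ * c₃] := by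
  ext i j
  fin_cases i <;> fin_cases j <;>
    simp [elemMat, Matrix.mul_apply, Fin.sum_univ_three, Matrix.one_apply] <;> ring

theorem monodromy_head_eq_tail_inv {a₁ a₂ a₃ b₁ b₂ b₃ c₁ c₂ c₃ : R}
    (hprod :
      elemMat 1 2 c₁ * elemMat 1 0 (-a₃) * elemMat 0 1 b₃ *
      elemMat 2 0 c₂ * elemMat 2 1 (-a₁) * elemMat 1 2 b₁ *
      elemMat 0 1 c₃ * elemMat 0 2 (-a₂) * elemMat 2 0 b₂ = 1) :
    elemMat 1 2 c₁ * elemMat 1 0 (-a₃) * elemMat 0 1 b₃ * elemMat 2 0 c₂ * elemMat 2 1 (-a₁) =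
      elemMat 2 0 (-b₂) * elemMat 0 2 a₂ * elemMat 0 1 (-c₃) * elemMat 1 2 (-b₁) := by
  have htail : elemMat 1 2 b₁ * elemMat 0 1 c₃ * elemMat 0 2 (-a₂) * elemMat 2 0 b₂ *
      (elemMat 2 0 (-b₂) * elemMat 0 2 a₂ * elemMat 0 1 (-c₃) * elemMat 1 2 (-b₁)) = 1 := by
    simp only [mul_assoc, elemMat_mul_elemMat_neg_mul (by decide : (2 : Fin 3) ≠ 0),
      elemMat_neg_mul_elemMat_mul (by decide : (0 : Fin 3) ≠ 2),
      elemMat_mul_elemMat_neg_mul (by decide : (0 : Fin 3) ≠ 1),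
      elemMat_mul_elemMat_neg (by decide : (1 : Fin 3) ≠ 2)]
  have hsplit : elemMat 1 2 c₁ * elemMat 1 0 (-a₃) * elemMat 0 1 b₃ * elemMat 2 0 c₂ *
      elemMat 2 1 (-a₁) *
      (elemMat 1 2 b₁ * elemMat 0 1 c₃ * elemMat 0 2 (-a₂) * elemMat 2 0 b₂) = 1 := by
    simp only [mul_assoc] at hprod ⊢
    exact hprod
  exact left_inv_eq_right_inv hsplit htail

end

theorem positive_vertex_monodromy_general {R : Type*} [CommRing R]
    (v a₁ a₂ a₃ b₁ b₂ b₃ c₁ c₂ c₃ : R)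
    (h1 : a₁ * b₁ = v)
    (hprod :
      elemMat 1 2 c₁ * elemMat 1 0 (-a₃) * elemMat 0 1 b₃ *
      elemMat 2 0 c₂ * elemMat 2 1 (-a₁) * elemMat 1 2 b₁ *
      elemMat 0 1 c₃ * elemMat 0 2 (-a₂) * elemMat 2 0 b₂ = 1) :
    c₁ = -b₁ ∧ c₂ = -b₂ ∧ c₃ = -b₃ ∧
    a₁ = b₂ * b₃ ∧ a₂ = b₃ * b₁ ∧ a₃ = b₁ * b₂ ∧
    b₁ * b₂ * b₃ = v ∧ a₁ * a₂ * a₃ = v ^ 2 := by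
  have h := monodromy_head_eq_tail_inv hprod
  rw [monodromy_head_eq, monodromy_tail_inv_eq] at h
  have e01 : b₃ = -c₃ := by simpa using congrFun (congrFun h 0) 1
  have e02 : 0 = a₂ + b₁ * c₃ := by simpa using congrFun (congrFun h 0) 2
  have e10 : c₁ * c₂ - a₃ = 0 := by simpa using congrFun (congrFun h 1) 0
  have hc1 : c₁ = -b₁ := by simpa using congrFun (congrFun h 1) 2
  have hc2 : c₂ = -b₂ := by simpa using congrFun (congrFun h 2) 0
  have e21 : -a₁ = b₂ * c₃ := by simpa using congrFun (congrFun h 2) 1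
  have hc3 : c₃ = -b₃ := by linear_combination e01
  have ha1 : a₁ = b₂ * b₃ := by linear_combination -e21 - b₂ * e01
  have ha2 : a₂ = b₃ * b₁ := by linear_combination -e02 - b₁ * e01
  have ha3 : a₃ = b₁ * b₂ := by linear_combination -e10 + c₂ * hc1 - b₁ * hc2
  have hv : b₁ * b₂ * b₃ = v := by linear_combination h1 - b₁ * ha1
  refine ⟨hc1, hc2, hc3, ha1, ha2, ha3, hv, ?_⟩
  rw [ha1, ha2, ha3, ← hv]
  ring

/-- Monodromy of handle slides around a positive vertex: if the indicated
product of elementary matrices is the identity and aᵢ·bᵢ = v for each i,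
then cᵢ = -bᵢ, aᵢ = bⱼ·bₖ (cyclically), b₁b₂b₃ = v and a₁a₂a₃ = v². -/
theorem positive_vertex_monodromy {R : Type*} [CommRing R]
    (v a₁ a₂ a₃ b₁ b₂ b₃ c₁ c₂ c₃ : R)
    (h1 : a₁ * b₁ = v) (h2 : a₂ * b₂ = v) (h3 : a₃ * b₃ = v)
    (hprod :
      elemMat 1 2 c₁ * elemMat 1 0 (-a₃) * elemMat 0 1 b₃ *
      elemMat 2 0 c₂ * elemMat 2 1 (-a₁) * elemMat 1 2 b₁ *
      elemMat 0 1 c₃ * elemMat 0 2 (-a₂) * elemMat 2 0 b₂ = 1) :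
    c₁ = -b₁ ∧ c₂ = -b₂ ∧ c₃ = -b₃ ∧
    a₁ = b₂ * b₃ ∧ a₂ = b₃ * b₁ ∧ a₃ = b₁ * b₂ ∧
    b₁ * b₂ * b₃ = v ∧ a₁ * a₂ * a₃ = v ^ 2 :=
  positive_vertex_monodromy_general v a₁ a₂ a₃ b₁ b₂ b₃ c₁ c₂ c₃ h1 hprod
end

section
/- Let n be a positive integer, m a nonzero integer, k an integer, and ε ∈ {1,-1}. Suppose there exists δ > 0 such that for all θ ∈ (0, δ), 1 - e^{i m θ / n} = ε · e^{i k θ} · (1 - e^{i θ}). Then |m| = n; moreover if m > 0 then ε = 1 and k = 0, and if m < 0 then ε = -1 and k = -1. -/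
/-!
Both sides vanish at θ = 0, so comparing their derivatives there gives `-i m/n = -i ε`, i.e.
`m = ε n`. Substituting back, the relation becomes `(1 - e^{iθ}) e^{icθ} = 1 - e^{iθ}` with
`c = k` if `ε = 1` and `c = k + 1` if `ε = -1`. Since `e^{iθ} ≠ 1` for small `θ > 0`, this
forces `e^{icθ} = 1` near `0⁺`, and comparing derivatives once more gives `c = 0`.
-/

open Complex Filter Topology

theorem HasDerivAt.eq_of_eventuallyEq_nhdsGT {E : Type*} [NormedAddCommGroup E]
    [NormedSpace ℝ E] {f g : ℝ → E} {f' g' : E} {a : ℝ} (hf : HasDerivAt f f' a)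
    (hg : HasDerivAt g g' a) (hfg : f =ᶠ[𝓝[>] a] g) (ha : f a = g a) : f' = g' :=
  (uniqueDiffWithinAt_Ioi a).eq_deriv _
    (hf.hasDerivWithinAt.congr_of_eventuallyEq hfg.symm ha.symm) hg.hasDerivWithinAt

theorem hasDerivAt_cexp_I_mul (c : ℂ) (θ : ℝ) :
    HasDerivAt (fun t : ℝ => exp (I * (c * t))) (I * c * exp (I * (c * θ))) θ := by
  have := (((hasDerivAt_id θ).ofReal_comp.const_mul c).const_mul I).cexp
  simpa [mul_comm] using this

theorem eventually_cexp_I_mul_ne_one : ∀ᶠ θ : ℝ in 𝓝[>] 0, exp (I * θ) ≠ 1 := by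
  have h := hasDerivAt_cexp_I_mul 1 0
  simp only [one_mul, ofReal_zero, mul_zero, exp_zero, mul_one] at h
  exact nhdsGT_le_nhdsNE 0 (h.eventually_ne I_ne_zero)

theorem eq_zero_of_eventually_cexp_I_mul_eq_one {c : ℂ}
    (h : ∀ᶠ θ : ℝ in 𝓝[>] 0, exp (I * (c * θ)) = 1) : c = 0 := by
  simpa using (hasDerivAt_cexp_I_mul c 0).eq_of_eventuallyEq_nhdsGT (hasDerivAt_const 0 1) h
    (by simp)

theorem eq_zero_of_eventually_cexp_I_mul_mul_eq {c : ℂ}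
    (h : ∀ᶠ θ : ℝ in 𝓝[>] 0, exp (I * (c * θ)) * (1 - exp (I * θ)) = 1 - exp (I * θ)) :
    c = 0 := by
  refine eq_zero_of_eventually_cexp_I_mul_eq_one ?_
  filter_upwards [h, eventually_cexp_I_mul_ne_one] with θ hθ hne
  exact (mul_eq_right₀ (sub_ne_zero.mpr hne.symm)).mp hθ

/-- With `u = e^{iθ}`, this is the relation `1 - u^a = ε u^b (1 - u)` for small `θ > 0`. -/
def TorsionRelationNearZero (a b ε : ℂ) : Prop :=
  ∀ᶠ θ : ℝ in 𝓝[>] 0,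
    1 - exp (I * (a * θ)) = ε * exp (I * (b * θ)) * (1 - exp (I * θ))

namespace TorsionRelationNearZero

variable {a b ε : ℂ}

theorem eq_sign (h : TorsionRelationNearZero a b ε) : a = ε := by
  have hslope : -(I * a) = ε * -I := by
    have hF := (hasDerivAt_cexp_I_mul a 0).const_sub 1
    have hG := ((hasDerivAt_cexp_I_mul b 0).const_mul ε).mul
      ((hasDerivAt_cexp_I_mul 1 0).const_sub 1)
    simp only [one_mul] at hG
    simpa using hF.eq_of_eventuallyEq_nhdsGT hG h (by simp)
  linear_combination I * hslope + (a - ε) * I_mul_I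

theorem eq_zero_of_one (h : TorsionRelationNearZero 1 b 1) : b = 0 := by
  refine eq_zero_of_eventually_cexp_I_mul_mul_eq ?_
  filter_upwards [h] with θ hθ
  simp only [one_mul] at hθ
  linear_combination -hθ

theorem add_one_eq_zero_of_neg_one (h : TorsionRelationNearZero (-1) b (-1)) : b + 1 = 0 := by
  refine eq_zero_of_eventually_cexp_I_mul_mul_eq ?_
  filter_upwards [h] with θ hθ
  have hadd : exp (I * ((b + 1) * θ)) = exp (I * (b * θ)) * exp (I * θ) := by
    rw [← exp_add]; ring_nf
  have hinv : exp (I * (-1 * θ)) * exp (I * θ) = 1 := by rw [← exp_add]; simp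
  rw [hadd]
  linear_combination exp (I * θ) * hθ + hinv

end TorsionRelationNearZero

theorem torsion_taylor_constraints_general (n : ℕ) (m : ℤ)
    (k : ℤ) (ε : ℝ) (hε : ε = 1 ∨ ε = -1)
    (h : ∃ δ : ℝ, 0 < δ ∧ ∀ θ : ℝ, 0 < θ → θ < δ →
      1 - Complex.exp (Complex.I * ((m : ℂ) * (θ : ℂ) / (n : ℂ))) =
        (ε : ℂ) * Complex.exp (Complex.I * ((k : ℂ) * (θ : ℂ))) *
          (1 - Complex.exp (Complex.I * (θ : ℂ)))) :
    m.natAbs = n ∧ (0 < m → ε = 1 ∧ k = 0) ∧ (m < 0 → ε = -1 ∧ k = -1) := by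
  obtain ⟨δ, hδ, hδeq⟩ := h
  have hrel : TorsionRelationNearZero (m / n) k ε := by
    filter_upwards [Ioo_mem_nhdsGT hδ] with θ hθ
    simpa [mul_div_right_comm] using hδeq θ hθ.1 hθ.2
  have hratio : (m / n : ℂ) = ε := hrel.eq_sign
  have hε0 : (ε : ℂ) ≠ 0 := by rcases hε with rfl | rfl <;> norm_num
  have hn : (n : ℂ) ≠ 0 := (div_ne_zero_iff.mp (hratio ▸ hε0)).2
  have hmn : (m : ℝ) = ε * n := by exact_mod_cast (div_eq_iff hn).mp hratio
  rw [hratio] at hrel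
  rcases hε with rfl | rfl
  · have hrel₁ : TorsionRelationNearZero 1 k 1 := by simpa using hrel
    have hk : k = 0 := by exact_mod_cast hrel₁.eq_zero_of_one
    have hm : m = n := by exact_mod_cast hmn.trans (one_mul _)
    exact ⟨by omega, fun _ => ⟨rfl, hk⟩, fun _ => by omega⟩
  · have hrel₁ : TorsionRelationNearZero (-1) k (-1) := by simpa using hrel
    have hk : k + 1 = 0 := by exact_mod_cast hrel₁.add_one_eq_zero_of_neg_one
    have hm : m = -n := by exact_mod_cast hmn.trans (neg_one_mul _)
    exact ⟨by omega, fun _ => by omega, fun _ => ⟨rfl, by omega⟩⟩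

/-- If 1 - e^{imθ/n} = ε · e^{ikθ} · (1 - e^{iθ}) for all sufficiently small
θ > 0, then |m| = n; moreover m > 0 forces ε = 1 and k = 0, while m < 0
forces ε = -1 and k = -1. -/
theorem torsion_taylor_constraints (n : ℕ) (hn : 0 < n) (m : ℤ) (hm : m ≠ 0)
    (k : ℤ) (ε : ℝ) (hε : ε = 1 ∨ ε = -1)
    (h : ∃ δ : ℝ, 0 < δ ∧ ∀ θ : ℝ, 0 < θ → θ < δ →
      1 - Complex.exp (Complex.I * ((m : ℂ) * (θ : ℂ) / (n : ℂ))) =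
        (ε : ℂ) * Complex.exp (Complex.I * ((k : ℂ) * (θ : ℂ))) *
          (1 - Complex.exp (Complex.I * (θ : ℂ)))) :
    m.natAbs = n ∧ (0 < m → ε = 1 ∧ k = 0) ∧ (m < 0 → ε = -1 ∧ k = -1) :=
  torsion_taylor_constraints_general n m k ε hε h
end

section
/- Let R = ℤ[u, u⁻¹, (1-u)⁻¹], the localization of the Laurent polynomial ring ℤ[u,u⁻¹] at 1-u. Suppose v is a unit of R satisfying v^n = u^m for some integers n > 0 and m ≠ 0, and 1 - v = ε·u^k·(1-u) for some ε ∈ {±1} and k ∈ ℤ. Then |m| = n and v = u^{sign(m)}. -/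
open LaurentPolynomial
open Polynomial

noncomputable instance : IsDomain (LaurentPolynomial ℤ) := NoZeroDivisors.to_isDomain _

/-- shift-and-degree pipeline -/
lemma TR.key (p : LaurentPolynomial ℤ) (n : ℕ) (s : ℤ) (h : p ^ n = T s)
    (q : Polynomial ℤ) (N : ℕ) (hq : Polynomial.toLaurent q = T (N : ℤ) * p)
    (d : ℕ) (hd : q.natDegree = d) (hs : 0 ≤ (N : ℤ) * n + s) :
    (n : ℤ) * d = (N : ℤ) * n + s := by
  set t := ((N : ℤ) * n + s).toNat with htdef
  have ht : (t : ℤ) = (N : ℤ) * n + s := Int.toNat_of_nonneg hs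
  have h1 : Polynomial.toLaurent (q ^ n) = Polynomial.toLaurent (Polynomial.X ^ t) := by
    rw [map_pow, hq, mul_pow, h, T_pow, Polynomial.toLaurent_X_pow, ← T_add, ht]
    congr 1
    ring
  have h2 : q ^ n = Polynomial.X ^ t := Polynomial.toLaurent_injective h1
  have h3 : n * q.natDegree = t := by
    rw [← Polynomial.natDegree_pow, h2, Polynomial.natDegree_X_pow]
  rw [hd] at h3
  rw [← ht, ← h3]
  push_cast
  ring

lemma TR.aux (e k s : ℤ) (he : e = 1 ∨ e = -1) (n : ℕ) (hn : 0 < n)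
    (h : ((1 : LaurentPolynomial ℤ) - LaurentPolynomial.C e * T k * (1 - T 1)) ^ n = T s) :
    (1 ≤ k ∧ s = n * (k + 1)) ∨ (k = 0 ∧ s = n) ∨ (k = -1 ∧ e = 1 ∧ s = 0) ∨
      (k = -1 ∧ e = -1 ∧ s = -n) ∨ (k ≤ -2 ∧ s = 0) := by
  have he0 : e ≠ 0 := by rcases he with rfl | rfl <;> norm_num
  obtain ⟨N, hN⟩ : ∃ N : ℕ, N = k.natAbs + s.natAbs + 1 := ⟨_, rfl⟩
  have hNn : (N : ℤ) ≤ (N : ℤ) * n := le_mul_of_one_le_right (by positivity) (by exact_mod_cast hn)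
  have hs : 0 ≤ (N : ℤ) * n + s := by omega
  obtain ⟨a, ha⟩ : ∃ a : ℕ, (a : ℤ) = (N : ℤ) + k :=
    ⟨((N : ℤ) + k).toNat, Int.toNat_of_nonneg (by omega)⟩
  have ha1 : 1 ≤ a := by omega
  set q : Polynomial ℤ := X ^ N - Polynomial.C e * X ^ a + Polynomial.C e * X ^ (a + 1) with hqdef
  have t1 : (T (a : ℤ) : LaurentPolynomial ℤ) = T (N : ℤ) * T k := by
    rw [show (a : ℤ) = (N : ℤ) + k from ha, T_add]
  have t2 : (T ((a : ℤ) + 1) : LaurentPolynomial ℤ) = T (N : ℤ) * T k * T 1 := by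
    rw [show (a : ℤ) + 1 = ((N : ℤ) + k) + 1 by rw [ha], T_add, T_add]
  have hq : Polynomial.toLaurent q =
      T (N : ℤ) * ((1 : LaurentPolynomial ℤ) - LaurentPolynomial.C e * T k * (1 - T 1)) := by
    rw [hqdef]
    simp only [map_add, map_sub, map_mul, Polynomial.toLaurent_C, Polynomial.toLaurent_X_pow]
    push_cast
    rw [t1, t2]
    ring
  have key := fun (d : ℕ) (hd : q.natDegree = d) => TR.key _ n s h q N hq d hd hs
  rcases (by omega : 1 ≤ k ∨ k = 0 ∨ k = -1 ∨ k ≤ -2) with hk | hk | hk | hk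
  · -- 1 ≤ k : natDegree = a + 1
    have hd : q.natDegree = a + 1 := by
      have hq' : q = Polynomial.C e * X ^ (a + 1) + (X ^ N - Polynomial.C e * X ^ a) := by
        rw [hqdef]; ring
      rw [hq', natDegree_add_eq_left_of_natDegree_lt, natDegree_C_mul_X_pow _ _ he0]
      refine lt_of_le_of_lt (natDegree_sub_le _ _) ?_
      rw [natDegree_X_pow, natDegree_C_mul_X_pow _ _ he0, natDegree_C_mul_X_pow _ _ he0]
      simp only [max_lt_iff]
      omega
    have kk := key _ hd
    push_cast at kk
    exact Or.inl ⟨hk, by linear_combination (n : ℤ) * ha - kk⟩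
  · -- k = 0
    subst hk
    have haN : a = N := by omega
    subst haN
    have hd : q.natDegree = a + 1 := by
      have hq' : q = Polynomial.C e * X ^ (a + 1) + Polynomial.C (1 - e) * X ^ a := by
        rw [hqdef, map_sub, map_one]; ring
      rw [hq', natDegree_add_eq_left_of_natDegree_lt, natDegree_C_mul_X_pow _ _ he0]
      refine lt_of_le_of_lt (natDegree_C_mul_le _ _) ?_
      rw [natDegree_X_pow, natDegree_C_mul_X_pow _ _ he0]; omega
    have kk := key _ hd
    push_cast at kk
    refine Or.inr (Or.inl ⟨rfl, ?_⟩)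
    linear_combination (-1 : ℤ) * kk
  · -- k = -1
    subst hk
    have haN : N = a + 1 := by omega
    subst haN
    rcases he with rfl | rfl
    · have hC2 : (Polynomial.C 2 : Polynomial ℤ) = 2 := by norm_num
      have hd : q.natDegree = a + 1 := by
        have hq' : q = Polynomial.C 2 * X ^ (a + 1) + (-(X ^ a)) := by
          rw [hqdef, hC2, map_one]; ring
        rw [hq', natDegree_add_eq_left_of_natDegree_lt,
          natDegree_C_mul_X_pow _ _ (by norm_num : (2:ℤ) ≠ 0)]
        rw [natDegree_neg, natDegree_X_pow,
          natDegree_C_mul_X_pow _ _ (by norm_num : (2:ℤ) ≠ 0)]; omega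
      have kk := key _ hd
      push_cast at kk
      exact Or.inr (Or.inr (Or.inl ⟨rfl, rfl, by linear_combination (-1 : ℤ) * kk⟩))
    · have hd : q.natDegree = a := by
        have hq' : q = X ^ a := by
          rw [hqdef, map_neg, map_one]; ring
        rw [hq', natDegree_X_pow]
      have kk := key _ hd
      push_cast at kk
      exact Or.inr (Or.inr (Or.inr (Or.inl ⟨rfl, rfl, by linear_combination (-1 : ℤ) * kk⟩)))
  · -- k ≤ -2
    have hd : q.natDegree = N := by
      have hq' : q = X ^ N + (Polynomial.C e * X ^ (a + 1) - Polynomial.C e * X ^ a) := by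
        rw [hqdef]; ring
      rw [hq', natDegree_add_eq_left_of_natDegree_lt, natDegree_X_pow]
      refine lt_of_le_of_lt (natDegree_sub_le _ _) ?_
      rw [natDegree_X_pow, natDegree_C_mul_X_pow _ _ he0, natDegree_C_mul_X_pow _ _ he0]
      simp only [max_lt_iff]
      omega
    have kk := key _ hd
    push_cast at kk
    exact Or.inr (Or.inr (Or.inr (Or.inr ⟨hk, by linear_combination (-1 : ℤ) * kk⟩)))

lemma TR.sub_ne : ((1 : LaurentPolynomial ℤ) - T 1) ≠ 0 := by
  have h1 : Polynomial.toLaurent ((1 : Polynomial ℤ) - Polynomial.X) = 1 - T 1 := by simp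
  rw [← h1, Ne, Polynomial.toLaurent_eq_zero]
  intro h
  simpa [Polynomial.coeff_one] using congrArg (fun p => Polynomial.coeff p 1) h

/-- The ring R = ℤ[u, u⁻¹, (1-u)⁻¹]: the Laurent polynomial ring ℤ[u,u⁻¹]
localized away from 1 - u. -/
noncomputable abbrev TorsionRing : Type :=
  Localization.Away ((1 : LaurentPolynomial ℤ) - LaurentPolynomial.T 1)

/-- In R = ℤ[u,u⁻¹,(1-u)⁻¹], if a unit v satisfies v^n = u^m (n > 0, m ≠ 0)
and 1 - v = ε·u^k·(1-u) with ε = ±1, then |m| = n and v = u^{sign m}. -/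
theorem torsion_ring_rigidity (u v : TorsionRingˣ)
    (hu : (u : TorsionRing) =
      algebraMap (LaurentPolynomial ℤ) TorsionRing (LaurentPolynomial.T 1))
    (n : ℕ) (hn : 0 < n) (m : ℤ) (hm : m ≠ 0)
    (hvn : v ^ (n : ℤ) = u ^ m)
    (k : ℤ) (ε : TorsionRing) (hε : ε = 1 ∨ ε = -1)
    (hv : (1 : TorsionRing) - (v : TorsionRing) =
      ε * ((u ^ k : TorsionRingˣ) : TorsionRing) * (1 - (u : TorsionRing))) :
    m.natAbs = n ∧ v = u ^ m.sign := by
  set A := algebraMap (LaurentPolynomial ℤ) TorsionRing with hA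
  have injA : Function.Injective A := by
    apply IsLocalization.injective _ (M := Submonoid.powers ((1 : LaurentPolynomial ℤ) - T 1))
    exact Submonoid.powers_le.mpr (mem_nonZeroDivisors_of_ne_zero TR.sub_ne)
  have hnat : ∀ j : ℕ, ((u ^ (j : ℤ) : TorsionRingˣ) : TorsionRing) = A (T (j : ℤ)) := by
    intro j
    rw [zpow_natCast, Units.val_pow_eq_pow_val, hu, ← map_pow, T_pow, mul_one]
  have hpow : ∀ j : ℤ, ((u ^ j : TorsionRingˣ) : TorsionRing) = A (T j) := by
    intro j
    rcases le_or_gt 0 j with hj | hj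
    · obtain ⟨i, rfl⟩ := Int.eq_ofNat_of_zero_le hj; exact hnat i
    · obtain ⟨i, hi⟩ := Int.eq_ofNat_of_zero_le (by omega : (0:ℤ) ≤ -j)
      have e1 : ((u ^ j : TorsionRingˣ) : TorsionRing) * ((u ^ (-j) : TorsionRingˣ) : TorsionRing) = 1 := by
        rw [← Units.val_mul, ← zpow_add, add_neg_cancel, zpow_zero, Units.val_one]
      have e2 : A (T j) * ((u ^ (-j) : TorsionRingˣ) : TorsionRing) = 1 := by
        rw [hi, hnat i, ← hi, ← map_mul, ← T_add, add_neg_cancel, T_zero, map_one]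
      have e3 : ((u ^ j : TorsionRingˣ) : TorsionRing) = (((u ^ (-j))⁻¹ : TorsionRingˣ) : TorsionRing) :=
        Units.eq_inv_of_mul_eq_one_right e1
      have e4 : A (T j) = (((u ^ (-j))⁻¹ : TorsionRingˣ) : TorsionRing) :=
        Units.eq_inv_of_mul_eq_one_right e2
      rw [e3, e4]
  obtain ⟨el, hel, hεA⟩ : ∃ el : ℤ, (el = 1 ∨ el = -1) ∧ ε = A (LaurentPolynomial.C el) := by
    rcases hε with h | h
    · exact ⟨1, Or.inl rfl, by simp [h]⟩
    · exact ⟨-1, Or.inr rfl, by simp [h, map_neg]⟩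
  set p : LaurentPolynomial ℤ := 1 - LaurentPolynomial.C el * T k * (1 - T 1) with hp
  have hvL : (v : TorsionRing) = A p := by
    have h0 : (v : TorsionRing) = 1 - ε * ((u ^ k : TorsionRingˣ) : TorsionRing) * (1 - (u : TorsionRing)) := by
      rw [← hv]; ring
    rw [h0, hεA, hpow k, hu, hp, map_sub, map_one, map_mul, map_mul, map_sub, map_one]
  have hpn : p ^ n = T m := by
    apply injA
    rw [map_pow, ← hvL]
    have h0 : ((v : TorsionRing)) ^ n = ((v ^ (n : ℤ) : TorsionRingˣ) : TorsionRing) := by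
      rw [zpow_natCast, Units.val_pow_eq_pow_val]
    rw [h0, hvn, hpow m]
  have hpn2 : ((1 : LaurentPolynomial ℤ) - LaurentPolynomial.C (-el) * T (-k - 1) * (1 - T 1)) ^ n
      = T (-m) := by
    have h0 := congrArg (invert (R := ℤ)) hpn
    rw [map_pow, invert_T] at h0
    have h1 : invert (R := ℤ) p = 1 - LaurentPolynomial.C (-el) * T (-k - 1) * (1 - T 1) := by
      rw [hp, map_sub, map_mul, map_mul, map_sub, map_one, invert_T, invert_T, invert_C]
      have t1 : (T (-k) : LaurentPolynomial ℤ) = T (-k - 1) * T 1 := by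
        have h2 := T_add (R := ℤ) (-k - 1) 1
        rwa [show (-k - 1) + (1 : ℤ) = -k by ring] at h2
      have t2 : (T (-k) : LaurentPolynomial ℤ) * T (-1) = T (-k - 1) := by
        have h2 := (T_add (R := ℤ) (-k) (-1)).symm
        rwa [show (-k) + (-1 : ℤ) = -k - 1 by ring] at h2
      rw [map_neg]
      calc 1 - LaurentPolynomial.C el * T (-k) * (1 - T (-1))
          = 1 - LaurentPolynomial.C el * (T (-k) - T (-k) * T (-1)) := by ring
        _ = 1 - LaurentPolynomial.C el * (T (-k - 1) * T 1 - T (-k - 1)) := by rw [t2, t1]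
        _ = 1 - -LaurentPolynomial.C el * T (-k - 1) * (1 - T 1) := by ring
    rw [h1] at h0
    exact h0
  have eq1 := TR.aux el k m hel n hn hpn
  have eq2 := TR.aux (-el) (-k - 1) (-m) (by rcases hel with h | h <;> simp [h]) n hn hpn2
  have hk : (k = 0 ∧ el = 1 ∧ m = n) ∨ (k = -1 ∧ el = -1 ∧ m = -n) := by
    rcases eq1 with ⟨h1, _⟩ | ⟨h1, h2⟩ | ⟨h1, h2, h3⟩ | ⟨h1, h2, h3⟩ | ⟨h1, h2⟩
    · rcases eq2 with ⟨g1, _⟩ | ⟨g1, _⟩ | ⟨g1, _, _⟩ | ⟨g1, _, _⟩ | ⟨_, g2⟩ <;> omega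
    · rcases eq2 with ⟨g1, _⟩ | ⟨g1, _⟩ | ⟨g1, g2, g3⟩ | ⟨g1, g2, g3⟩ | ⟨g1, _⟩ <;> omega
    · omega
    · exact Or.inr ⟨h1, h2, h3⟩
    · omega
  refine ⟨by rcases hk with ⟨_, _, h⟩ | ⟨_, _, h⟩ <;> omega, ?_⟩
  rcases hk with ⟨hk0, hel1, hmn⟩ | ⟨hk1, hel1, hmn⟩
  · have hsign : m.sign = 1 := Int.sign_eq_one_of_pos (by omega)
    rw [hsign, zpow_one]
    apply Units.ext
    rw [hvL, hp, hk0, hel1, hu]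
    congr 1
    rw [map_one, T_zero]
    ring
  · have hsign : m.sign = -1 := Int.sign_eq_neg_one_of_neg (by omega)
    rw [hsign]
    have hpT : p = T (-1) := by
      rw [hp, hk1, hel1, map_neg, map_one]
      have t2 : (T (-1) : LaurentPolynomial ℤ) * T 1 = 1 := by
        rw [← T_add]; norm_num [T_zero]
      calc (1 : LaurentPolynomial ℤ) - -1 * T (-1) * (1 - T 1)
          = 1 + T (-1) - T (-1) * T 1 := by ring
        _ = T (-1) := by rw [t2]; ring
    have hvu : v * u = 1 := by
      apply Units.ext
      rw [Units.val_mul, hvL, hpT, hu, ← map_mul, ← T_add, Units.val_one]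
      norm_num [T_zero]
    rw [zpow_neg, zpow_one]
    exact eq_inv_of_mul_eq_one_left hvu
end
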